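/- Let F: R^d → R be L_0-Lipschitz and η > 0. Then the Gaussian-smoothed function F_η(θ) = E_v[F(θ+ηv)] (v ~ N(0,I_d)) has Lipschitz continuous gradient with constant L_η = (√d / η) L_0, i.e., ||∇F_η(x) − ∇F_η(y)|| ≤ (√d L_0 / η) ||x − y|| for all x, y. -/

import Mathlib

open MeasureTheory ProbabilityTheory

noncomputable def stdGaussian (d : ℕ) : Measure (EuclideanSpace ℝ (Fin d)) :=
  (Measure.pi fun _ => gaussianReal 0 1).map (MeasurableEquiv.toLp 2 (Fin d → ℝ))

/-! The terms `F(x) v` and `F(y) v` in `∇F_η(x) − ∇F_η(y)` integrate to zero because `E[v] = 0`,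
leaving `E[((F(x+ηv) − F(y+ηv))/η) v]`, whose integrand has norm at most `(L₀‖x−y‖/η)‖v‖`.
By Cauchy–Schwarz `E‖v‖ ≤ √(E‖v‖²) = √d`. -/

theorem stdGaussian_eq_stdGaussian_euclideanSpace (d : ℕ) :
    stdGaussian d = ProbabilityTheory.stdGaussian (EuclideanSpace ℝ (Fin d)) :=
  map_pi_eq_stdGaussian

theorem integral_le_sqrt_integral_sq {Ω : Type*} [MeasurableSpace Ω] {μ : Measure Ω}
    [IsProbabilityMeasure μ] {f : Ω → ℝ} (hf : MemLp f 2 μ) :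
    ∫ ω, f ω ∂μ ≤ √(∫ ω, f ω ^ 2 ∂μ) := by
  have := variance_nonneg f μ
  rw [variance_eq_sub hf] at this
  exact Real.le_sqrt_of_sq_le (by simpa using this)

open scoped InnerProductSpace

namespace ProbabilityTheory

variable {E : Type*} [NormedAddCommGroup E] [InnerProductSpace ℝ E] [FiniteDimensional ℝ E]
  [MeasurableSpace E] [BorelSpace E]

theorem integral_norm_sq_stdGaussian :
    ∫ v, ‖v‖ ^ 2 ∂(stdGaussian E) = Module.finrank ℝ E := by
  let b := stdOrthonormalBasis ℝ E
  have hcoord (i) : ∫ v, ⟪b i, v⟫_ℝ ^ 2 ∂(stdGaussian E) = 1 := by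
    have h := variance_of_integral_eq_zero (innerSL ℝ (b i)).continuous.aemeasurable
      (integral_strongDual_stdGaussian _)
    rw [variance_dual_stdGaussian, innerSL_apply_norm, b.norm_eq_one] at h
    simpa using h.symm
  simp_rw [← b.sum_sq_norm_inner_right, Real.norm_eq_abs, sq_abs]
  rw [integral_finsetSum _ fun i _ => ?_]
  · simp [hcoord]
  · exact ((IsGaussian.memLp_two_id).continuousLinearMap_comp (innerSL ℝ (b i))).integrable_sq

theorem integral_norm_stdGaussian_le :
    ∫ v, ‖v‖ ∂(stdGaussian E) ≤ √(Module.finrank ℝ E) := by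
  simpa [integral_norm_sq_stdGaussian] using
    integral_le_sqrt_integral_sq (IsGaussian.memLp_two_id (μ := stdGaussian E)).norm

end ProbabilityTheory

section Lipschitz

variable {E : Type*} [SeminormedAddCommGroup E] {F : E → ℝ} {L η : ℝ}

theorem continuous_of_abs_sub_le (hF : ∀ x y, |F x - F y| ≤ L * ‖x - y‖) : Continuous F :=
  (LipschitzWith.of_dist_le' (K := L) fun x y => by
    simpa [Real.dist_eq, dist_eq_norm] using hF x y).continuous

theorem abs_shiftDiff_div_le [SMul ℝ E] (hF : ∀ x y, |F x - F y| ≤ L * ‖x - y‖) (hη : 0 < η)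
    (x y v : E) :
    |(F (x + η • v) - F (y + η • v)) / η| ≤ L * ‖x - y‖ / η := by
  rw [abs_div, abs_of_pos hη]
  gcongr
  simpa using hF (x + η • v) (y + η • v)

end Lipschitz

section Smoothing

variable {E : Type*} [NormedAddCommGroup E] [NormedSpace ℝ E]
  [MeasurableSpace E] [OpensMeasurableSpace E] {μ : Measure E} {F : E → ℝ} {L η : ℝ}

/-- The paper's `∇F_η(θ)`, with the law of `v` generalised to `μ`. -/
noncomputable def smoothedGrad (μ : Measure E) (F : E → ℝ) (η : ℝ) (θ : E) : E :=
  ∫ v, ((F (θ + η • v) - F θ) / η) • v ∂μ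

theorem integrable_finiteDiff_smul (hF : ∀ x y, |F x - F y| ≤ L * ‖x - y‖) (hη : 0 < η)
    (hμ : MemLp id 2 μ) (θ : E) :
    Integrable (fun v => ((F (θ + η • v) - F θ) / η) • v) μ := by
  refine Integrable.mono' ((hμ.integrable_norm_pow two_ne_zero).const_mul L) ?_
    (.of_forall fun v => ?_)
  · exact ((((continuous_of_abs_sub_le hF).comp (by fun_prop)).sub continuous_const).div_const
      η).aestronglyMeasurable.smul hμ.1
  · have h := hF (θ + η • v) θ
    rw [add_sub_cancel_left, norm_smul, Real.norm_of_nonneg hη.le] at h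
    rw [norm_smul, Real.norm_eq_abs, abs_div, abs_of_pos hη]
    calc |F (θ + η • v) - F θ| / η * ‖v‖ ≤ L * (η * ‖v‖) / η * ‖v‖ := by gcongr
      _ = L * ‖v‖ ^ 2 := by field_simp

theorem smoothedGrad_sub_smoothedGrad [IsFiniteMeasure μ]
    (hF : ∀ x y, |F x - F y| ≤ L * ‖x - y‖) (hη : 0 < η) (hμ : MemLp id 2 μ)
    (hμ₀ : ∫ v, v ∂μ = 0) (x y : E) :
    smoothedGrad μ F η x - smoothedGrad μ F η y
      = ∫ v, ((F (x + η • v) - F (y + η • v)) / η) • v ∂μ := by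
  have hid : Integrable id μ := hμ.integrable one_le_two
  have hshift : Integrable (fun v => ((F (x + η • v) - F (y + η • v)) / η) • v) μ := by
    refine Integrable.mono' (hid.norm.const_mul (L * ‖x - y‖ / η)) ?_
      (.of_forall fun v => ?_)
    · have hFc := continuous_of_abs_sub_le hF
      exact (((hFc.comp (by fun_prop)).sub (hFc.comp (by fun_prop))).div_const
        η).aestronglyMeasurable.smul hμ.1
    · rw [norm_smul, Real.norm_eq_abs]
      exact mul_le_mul_of_nonneg_right (abs_shiftDiff_div_le hF hη x y v) (norm_nonneg v)
  have hsplit (v : E) : ((F (x + η • v) - F x) / η) • v - ((F (y + η • v) - F y) / η) • v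
      = ((F (x + η • v) - F (y + η • v)) / η) • v - ((F x - F y) / η) • v := by
    rw [← sub_smul, ← sub_smul]
    congr 1; ring
  rw [smoothedGrad, smoothedGrad, ← integral_sub (integrable_finiteDiff_smul hF hη hμ x)
    (integrable_finiteDiff_smul hF hη hμ y)]
  simp_rw [hsplit]
  have hconst : Integrable (fun v => ((F x - F y) / η) • v) μ := hid.smul _
  rw [integral_sub hshift hconst, integral_smul, hμ₀, smul_zero, sub_zero]

theorem norm_smoothedGrad_sub_le [IsFiniteMeasure μ]
    (hF : ∀ x y, |F x - F y| ≤ L * ‖x - y‖) (hη : 0 < η) (hμ : MemLp id 2 μ)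
    (hμ₀ : ∫ v, v ∂μ = 0) {M : ℝ} (hM : ∫ v, ‖v‖ ∂μ ≤ M) (x y : E) :
    ‖smoothedGrad μ F η x - smoothedGrad μ F η y‖ ≤ M * L / η * ‖x - y‖ := by
  rw [smoothedGrad_sub_smoothedGrad hF hη hμ hμ₀]
  calc ‖∫ v, ((F (x + η • v) - F (y + η • v)) / η) • v ∂μ‖
      ≤ ∫ v, L * ‖x - y‖ / η * ‖v‖ ∂μ := by
        refine norm_integral_le_of_norm_le ((hμ.integrable one_le_two).norm.const_mul _)
          (.of_forall fun v => ?_)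
        rw [norm_smul, Real.norm_eq_abs]
        exact mul_le_mul_of_nonneg_right (abs_shiftDiff_div_le hF hη x y v) (norm_nonneg v)
    _ = L * ‖x - y‖ / η * ∫ v, ‖v‖ ∂μ := integral_const_mul _ _
    _ ≤ L * ‖x - y‖ / η * M :=
        mul_le_mul_of_nonneg_left hM ((abs_nonneg _).trans (abs_shiftDiff_div_le hF hη x y 0))
    _ = M * L / η * ‖x - y‖ := by ring

end Smoothing

/-- The gradient ∇F_η(θ) = E_v[((F(θ+ηv) − F(θ))/η) v] of the Gaussian smoothing of an
L₀-Lipschitz function is Lipschitz with constant √d L₀ / η. -/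
theorem stmt_13 (d : ℕ) (F : EuclideanSpace ℝ (Fin d) → ℝ) (L₀ η : ℝ)
    (hLip : ∀ x y, |F x - F y| ≤ L₀ * ‖x - y‖) (hη : 0 < η) :
    ∀ x y : EuclideanSpace ℝ (Fin d),
      ‖(∫ v, ((F (x + η • v) - F x) / η) • v ∂(stdGaussian d))
        - (∫ v, ((F (y + η • v) - F y) / η) • v ∂(stdGaussian d))‖
        ≤ (Real.sqrt d * L₀ / η) * ‖x - y‖ := by
  intro x y
  rw [stdGaussian_eq_stdGaussian_euclideanSpace]
  exact norm_smoothedGrad_sub_le hLip hη IsGaussian.memLp_two_id integral_id_stdGaussian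
    (by simpa using integral_norm_stdGaussian_le (E := EuclideanSpace ℝ (Fin d))) x y
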